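/- Gentle conjugation lemma. Let ρ_{AB} be a density operator on A⊗B, and let σ_B and Δ_B be positive semidefinite operators on B, each with trace at most 1, such that ρ_B = Tr_A ρ_{AB} satisfies ρ_B ≤ σ_B + Δ_B and σ_B + Δ_B is positive definite. Set G_B = σ_B^{1/2}·(σ_B + Δ_B)^{−1/2}. Then ‖ρ_{AB} − (1_A ⊗ G_B) ρ_{AB} (1_A ⊗ G_B†)‖₁ ≤ 2·√(2·Tr Δ_B). -/

import Mathlib

open Matrix MeasureTheory
open scoped Kronecker ENNReal ComplexOrder

noncomputable section

/-- Borel measurable structure on matrices. -/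
instance matrixMeasurableSpace (n : Type*) [Fintype n] : MeasurableSpace (Matrix n n ℂ) :=
  borel _

/-- A density operator: positive semidefinite with unit trace. -/
def IsDensity {n : Type*} [Fintype n] (ρ : Matrix n n ℂ) : Prop :=
  ρ.PosSemidef ∧ ρ.trace = 1

/-- A subnormalized state: positive semidefinite with trace at most one. -/
def IsSubState {n : Type*} [Fintype n] (ρ : Matrix n n ℂ) : Prop :=
  ρ.PosSemidef ∧ (ρ.trace).re ≤ 1

/-- The positive semidefinite square root of a positive semidefinite matrix
(the former Mathlib `Matrix.PosSemidef.sqrt`, spelled out with its old definition). -/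
def Matrix.PosSemidef.sqrt {n : Type*} [Fintype n] [DecidableEq n] {A : Matrix n n ℂ}
    (hA : A.PosSemidef) : Matrix n n ℂ :=
  (hA.1.eigenvectorUnitary : Matrix n n ℂ) * diagonal ((↑) ∘ (√·) ∘ hA.1.eigenvalues) *
    (star hA.1.eigenvectorUnitary : Matrix n n ℂ)

-- Positive semidefinite square root (junk value `0` on non-PSD input).
open scoped Classical in
def msqrt {n : Type*} [Fintype n] [DecidableEq n] (X : Matrix n n ℂ) : Matrix n n ℂ :=
  if h : X.PosSemidef then h.sqrt else 0

/-- Trace norm `‖X‖₁ = Tr √(XᴴX)`. -/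
def traceNorm {n : Type*} [Fintype n] [DecidableEq n] (X : Matrix n n ℂ) : ℝ :=
  ((Matrix.posSemidef_conjTranspose_mul_self X).sqrt).trace.re

/-- Fidelity `F(ρ,σ) = ‖√ρ√σ‖₁`. -/
def fid {n : Type*} [Fintype n] [DecidableEq n] (ρ σ : Matrix n n ℂ) : ℝ :=
  traceNorm (msqrt ρ * msqrt σ)

/-- Generalized fidelity of subnormalized states. -/
def gFid {n : Type*} [Fintype n] [DecidableEq n] (ρ σ : Matrix n n ℂ) : ℝ :=
  fid ρ σ + Real.sqrt ((1 - ρ.trace.re) * (1 - σ.trace.re))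

/-- Purified distance. -/
def pDist {n : Type*} [Fintype n] [DecidableEq n] (ρ σ : Matrix n n ℂ) : ℝ :=
  Real.sqrt (1 - (gFid ρ σ) ^ 2)

/-- The ε-ball of subnormalized states around `ρ` in purified distance. -/
def pBall {n : Type*} [Fintype n] [DecidableEq n] (ε : ℝ) (ρ : Matrix n n ℂ) :
    Set (Matrix n n ℂ) :=
  {τ | IsSubState τ ∧ pDist ρ τ ≤ ε}

/-- Partial trace over the second tensor factor. -/
def ptraceB {a b : Type*} [Fintype b] (ρ : Matrix (a × b) (a × b) ℂ) : Matrix a a ℂ :=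
  Matrix.of fun i j => ∑ k, ρ (i, k) (j, k)

/-- Partial trace over the first tensor factor. -/
def ptraceA {a b : Type*} [Fintype a] (ρ : Matrix (a × b) (a × b) ℂ) : Matrix b b ℂ :=
  Matrix.of fun i j => ∑ k, ρ (k, i) (k, j)

/-- Partial trace over the middle factor of `(S ⊗ E) ⊗ R`, giving a state on `S ⊗ R`. -/
def ptraceMid {s e r : Type*} [Fintype e]
    (ρ : Matrix ((s × e) × r) ((s × e) × r) ℂ) : Matrix (s × r) (s × r) ℂ :=
  Matrix.of fun p q => ∑ k, ρ ((p.1, k), p.2) ((q.1, k), q.2)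

/-- Conditional min-entropy `H_min(A|B)_ρ` (first factor conditioned on the second). -/
def Hmin {a b : Type*} [Fintype a] [Fintype b] [DecidableEq a]
    (ρ : Matrix (a × b) (a × b) ℂ) : ℝ :=
  sSup {l : ℝ | ∃ σ : Matrix b b ℂ, IsDensity σ ∧
    (((2 : ℝ) ^ (-l) • ((1 : Matrix a a ℂ) ⊗ₖ σ)) - ρ).PosSemidef}

/-- Smooth conditional min-entropy `H_min^ε(A|B)_ρ`. -/
def sHmin {a b : Type*} [Fintype a] [Fintype b] [DecidableEq a] [DecidableEq b]
    (ε : ℝ) (ρ : Matrix (a × b) (a × b) ℂ) : ℝ :=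
  sSup (Hmin '' pBall ε ρ)

/-- Non-conditional min-entropy. -/
def Hmin0 {a : Type*} [Fintype a] [DecidableEq a] (ρ : Matrix a a ℂ) : ℝ :=
  sSup {l : ℝ | (((2 : ℝ) ^ (-l) • (1 : Matrix a a ℂ)) - ρ).PosSemidef}

/-- Smooth non-conditional min-entropy. -/
def sHmin0 {a : Type*} [Fintype a] [DecidableEq a] (ε : ℝ) (ρ : Matrix a a ℂ) : ℝ :=
  sSup (Hmin0 '' pBall ε ρ)

/-- Conditional max-entropy `H_max(A|B)_ρ`. -/
def Hmax {a b : Type*} [Fintype a] [Fintype b] [DecidableEq a] [DecidableEq b]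
    (ρ : Matrix (a × b) (a × b) ℂ) : ℝ :=
  sSup {x : ℝ | ∃ σ : Matrix b b ℂ, IsDensity σ ∧
    x = Real.logb 2 ((fid ρ ((1 : Matrix a a ℂ) ⊗ₖ σ)) ^ 2)}

/-- Smooth conditional max-entropy `H_max^ε(A|B)_ρ`. -/
def sHmax {a b : Type*} [Fintype a] [Fintype b] [DecidableEq a] [DecidableEq b]
    (ε : ℝ) (ρ : Matrix (a × b) (a × b) ℂ) : ℝ :=
  sInf (Hmax '' pBall ε ρ)

/-- Non-conditional max-entropy `H_max(A)_ρ = log₂ F(ρ, 1)²`. -/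
def Hmax0 {a : Type*} [Fintype a] [DecidableEq a] (ρ : Matrix a a ℂ) : ℝ :=
  Real.logb 2 ((fid ρ (1 : Matrix a a ℂ)) ^ 2)

/-- Smooth non-conditional max-entropy. -/
def sHmax0 {a : Type*} [Fintype a] [DecidableEq a] (ε : ℝ) (ρ : Matrix a a ℂ) : ℝ :=
  sInf (Hmax0 '' pBall ε ρ)

/-- Alternative conditional min-entropy `Ĥ_min(A|B)_ρ` (conditioning on the marginal itself). -/
def HminAlt {a b : Type*} [Fintype a] [Fintype b] [DecidableEq a]
    (ρ : Matrix (a × b) (a × b) ℂ) : ℝ :=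
  sSup {l : ℝ | (((2 : ℝ) ^ (-l) • ((1 : Matrix a a ℂ) ⊗ₖ ptraceA ρ)) - ρ).PosSemidef}

/-- Alternative smooth conditional min-entropy `Ĥ_min^ε(A|B)_ρ`. -/
def sHminAlt {a b : Type*} [Fintype a] [Fintype b] [DecidableEq a] [DecidableEq b]
    (ε : ℝ) (ρ : Matrix (a × b) (a × b) ℂ) : ℝ :=
  sSup (HminAlt '' pBall ε ρ)

/-- Hypothesis-testing relative entropy
`2^{−D_H^ε(ρ‖σ)} = (1/ε)·inf{Tr(Qσ) : 0 ≤ Q ≤ 1, Tr(Qρ) ≥ ε}`. -/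
def DH {n : Type*} [Fintype n] [DecidableEq n] (ε : ℝ) (ρ σ : Matrix n n ℂ) : ℝ :=
  - Real.logb 2 ((1 / ε) *
    sInf {x : ℝ | ∃ Q : Matrix n n ℂ, Q.PosSemidef ∧ ((1 : Matrix n n ℂ) - Q).PosSemidef ∧
      ε ≤ ((Q * ρ).trace).re ∧ x = ((Q * σ).trace).re})

/-- Hypothesis-testing conditional entropy `H_h^ε(A|B)_ρ = −D_H^ε(ρ_{AB}‖1_A⊗ρ_B)`. -/
def Hh {a b : Type*} [Fintype a] [Fintype b] [DecidableEq a] [DecidableEq b]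
    (ε : ℝ) (ρ : Matrix (a × b) (a × b) ℂ) : ℝ :=
  - DH ε ρ ((1 : Matrix a a ℂ) ⊗ₖ ptraceA ρ)

/-- Non-conditional hypothesis-testing entropy `H_h^ε(A)_ρ = −D_H^ε(ρ‖1_A)`. -/
def Hh0 {a : Type*} [Fintype a] [DecidableEq a] (ε : ℝ) (ρ : Matrix a a ℂ) : ℝ :=
  - DH ε ρ (1 : Matrix a a ℂ)

/-- Choi matrix of a linear map on matrices. -/
def choi {a b : Type*} [Fintype a] [Fintype b] [DecidableEq a]
    (T : Matrix a a ℂ →ₗ[ℂ] Matrix b b ℂ) : Matrix (a × b) (a × b) ℂ :=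
  Matrix.of fun p q => (T (Matrix.single p.1 q.1 1)) p.2 q.2

/-- Complete positivity, via positivity of the Choi matrix. -/
def IsCP {a b : Type*} [Fintype a] [Fintype b] [DecidableEq a]
    (T : Matrix a a ℂ →ₗ[ℂ] Matrix b b ℂ) : Prop :=
  (choi T).PosSemidef

/-- Trace preservation. -/
def IsTP {a b : Type*} [Fintype a] [Fintype b]
    (T : Matrix a a ℂ →ₗ[ℂ] Matrix b b ℂ) : Prop :=
  ∀ X : Matrix a a ℂ, (T X).trace = X.trace

/-- The map `T ⊗ I_R` applied entrywise to a state on `A ⊗ R`. -/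
def tensId {a b r : Type*} (T : Matrix a a ℂ →ₗ[ℂ] Matrix b b ℂ)
    (ρ : Matrix (a × r) (a × r) ℂ) : Matrix (b × r) (b × r) ℂ :=
  Matrix.of fun p q => (T (Matrix.of fun i j => ρ (i, p.2) (j, q.2))) p.1 q.1

/-- A pure state: a rank-one projector `|v⟩⟨v|`. -/
def IsPure {n : Type*} (ρ : Matrix n n ℂ) : Prop :=
  ∃ v : n → ℂ, ρ = Matrix.vecMulVec v (star v)

/-!
Write `R = √ρ`, `K = 1 ⊗ G` and `E = 1 - K`. Then `ρ - KρK† = (ER)R + (KR)(RE†)`, and since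
`G†G = S⁻¹σS⁻¹ ≤ S⁻¹(σ+Δ)S⁻¹ = 1` for `S = √(σ+Δ)`, `K` is a contraction; Hölder's inequality
`‖XY‖₁ ≤ ‖X‖₂‖Y‖₂` then bounds the trace norm by `2 √(Tr EρE†)`. Tracing out `A`,
`Tr EρE† = Tr (1-G)ρ_B(1-G)† ≤ Tr (1-G)(σ+Δ)(1-G)† = Tr (S - √σ)²`, because `(1-G)S = S - √σ`;
and `Tr (S - √σ)² = Tr Δ - 2 Tr √σ(S - √σ) ≤ Tr Δ` by operator monotonicity of the square root.

The trace-norm inequalities come from `‖Z‖₁ = sup {Re Tr WZ : ‖W‖ ≤ 1}`, where the supremum is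
approached by the approximate polar decomposition `Z = (ZS⁻¹)S` with `S = |Z| + ε`.
-/

open scoped MatrixOrder Matrix.Norms.L2Operator

section CStarAlgebra

variable {A : Type*} [CStarAlgebra A] [PartialOrder A] [StarOrderedRing A]

theorem norm_le_one_iff_star_mul_self_le_one {a : A} : ‖a‖ ≤ 1 ↔ star a * a ≤ 1 := by
  rw [← CStarAlgebra.norm_le_one_iff_of_nonneg (star a * a), CStarRing.norm_star_mul_self,
    ← abs_le_one_iff_mul_self_le_one, abs_norm]

end CStarAlgebra

namespace Matrix

variable {n : Type*} [Fintype n]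

theorem PosSemidef.sqrt_eq_cfcSqrt [DecidableEq n] {A : Matrix n n ℂ} (hA : A.PosSemidef) :
    hA.sqrt = CFC.sqrt A := by
  rw [CFC.sqrt_eq_real_sqrt A hA.nonneg, cfcₙ_eq_cfc, hA.1.cfc_eq, IsHermitian.cfc,
    Unitary.conjStarAlgAut_apply]
  rfl

theorem re_trace_mono {A B : Matrix n n ℂ} (h : A ≤ B) : A.trace.re ≤ B.trace.re := by
  have := (tracePositiveLinearMap n ℂ ℂ).mono h
  exact (Complex.le_def.mp this).1

theorem re_trace_nonneg {A : Matrix n n ℂ} (h : 0 ≤ A) : 0 ≤ A.trace.re := by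
  simpa using re_trace_mono h

theorem re_trace_mul_nonneg [DecidableEq n] {A B : Matrix n n ℂ} (hA : 0 ≤ A) (hB : 0 ≤ B) :
    0 ≤ (A * B).trace.re := by
  have h : (A * B).trace = (star (CFC.sqrt A) * B * CFC.sqrt A).trace := by
    rw [(CFC.sqrt_nonneg A).star_eq, trace_mul_cycle, CFC.sqrt_mul_sqrt_self A]
  rw [h]
  exact re_trace_nonneg (star_left_conjugate_nonneg hB _)

end Matrix

section HilbertSchmidt

variable {m n : Type*} [Fintype m] [Fintype n]

def hsNorm (X : Matrix m n ℂ) : ℝ := √(Xᴴ * X).trace.re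

theorem trace_conjTranspose_mul_eq_inner (X Y : Matrix m n ℂ) :
    (Xᴴ * Y).trace = inner ℂ (WithLp.toLp 2 fun p : m × n ↦ X p.1 p.2)
      (WithLp.toLp 2 fun p : m × n ↦ Y p.1 p.2) := by
  simp only [Matrix.trace, Matrix.diag_apply, Matrix.mul_apply, Matrix.conjTranspose_apply,
    RCLike.star_def, mul_comm, PiLp.inner_apply, RCLike.inner_apply, Fintype.sum_prod_type]
  exact Finset.sum_comm

theorem re_trace_conjTranspose_mul_le (X Y : Matrix m n ℂ) :
    (Xᴴ * Y).trace.re ≤ hsNorm X * hsNorm Y := by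
  simp only [hsNorm, trace_conjTranspose_mul_eq_inner, ← RCLike.re_eq_complex_re,
    ← norm_eq_sqrt_re_inner]
  exact re_inner_le_norm _ _

theorem hsNorm_mul_self (X : Matrix m n ℂ) : hsNorm X * hsNorm X = (Xᴴ * X).trace.re :=
  Real.mul_self_sqrt (Complex.le_def.mp (posSemidef_conjTranspose_mul_self X).trace_nonneg).1

theorem hsNorm_conjTranspose (X : Matrix m n ℂ) : hsNorm Xᴴ = hsNorm X := by
  rw [hsNorm, hsNorm, Matrix.conjTranspose_conjTranspose, Matrix.trace_mul_comm]

end HilbertSchmidt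

section Contraction

variable {m n : Type*} [Fintype m] [Fintype n] [DecidableEq n]

theorem hsNorm_mul_le_of_norm_le_one_left {W : Matrix n n ℂ} (hW : ‖W‖ ≤ 1)
    (X : Matrix n m ℂ) : hsNorm (W * X) ≤ hsNorm X := by
  have hWW : (1 - Wᴴ * W).PosSemidef := norm_le_one_iff_star_mul_self_le_one.mp hW
  have h : (W * X)ᴴ * (W * X) ≤ Xᴴ * X := by
    refine sub_nonneg.mp ?_
    convert (hWW.conjTranspose_mul_mul_same X).nonneg using 1
    simp only [Matrix.conjTranspose_mul, Matrix.mul_sub, Matrix.sub_mul, Matrix.mul_one,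
      Matrix.mul_assoc]
  exact Real.sqrt_le_sqrt (Matrix.re_trace_mono h)

theorem hsNorm_mul_le_of_norm_le_one_right {W : Matrix n n ℂ} (hW : ‖W‖ ≤ 1)
    (X : Matrix m n ℂ) : hsNorm (X * W) ≤ hsNorm X := by
  rw [← hsNorm_conjTranspose, Matrix.conjTranspose_mul, ← hsNorm_conjTranspose X]
  exact hsNorm_mul_le_of_norm_le_one_left (by rwa [Matrix.l2_opNorm_conjTranspose]) _

theorem re_trace_mul_le_of_norm_le_one {W Q : Matrix n n ℂ} (hW : ‖W‖ ≤ 1) (hQ : 0 ≤ Q) :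
    (W * Q).trace.re ≤ Q.trace.re := by
  set R := CFC.sqrt Q
  have hR : Rᴴ = R := (CFC.sqrt_nonneg Q).star_eq
  have hRR : R * R = Q := CFC.sqrt_mul_sqrt_self Q
  calc (W * Q).trace.re = (Rᴴ * (W * R)).trace.re := by
        rw [hR, ← hRR, ← Matrix.mul_assoc, Matrix.trace_mul_cycle, Matrix.mul_assoc]
    _ ≤ hsNorm R * hsNorm (W * R) := re_trace_conjTranspose_mul_le _ _
    _ ≤ hsNorm R * hsNorm R := by
        gcongr
        exacts [Real.sqrt_nonneg _, hsNorm_mul_le_of_norm_le_one_left hW R]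
    _ = Q.trace.re := by rw [hsNorm_mul_self, hR, hRR]

theorem norm_mul_inv_le_one_of_le {Z S : Matrix n n ℂ} (hS : IsUnit S) (hSh : Sᴴ = S)
    (h : Zᴴ * Z ≤ S * S) : ‖Z * S⁻¹‖ ≤ 1 := by
  have hdet := (Matrix.isUnit_iff_isUnit_det S).mp hS
  rw [norm_le_one_iff_star_mul_self_le_one]
  calc star (Z * S⁻¹) * (Z * S⁻¹) = star S⁻¹ * (Zᴴ * Z) * S⁻¹ := by
        simp only [star_mul, Matrix.star_eq_conjTranspose, Matrix.mul_assoc]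
    _ ≤ star S⁻¹ * (S * S) * S⁻¹ := star_left_conjugate_le_conjugate h _
    _ = 1 := by
        rw [Matrix.star_eq_conjTranspose, Matrix.conjTranspose_nonsing_inv, hSh,
          ← Matrix.mul_assoc, Matrix.nonsing_inv_mul _ hdet, Matrix.one_mul,
          Matrix.mul_nonsing_inv _ hdet]

end Contraction

section TraceNorm

variable {n : Type*} [Fintype n] [DecidableEq n]

theorem traceNorm_eq_re_trace_abs (Z : Matrix n n ℂ) : traceNorm Z = (CFC.abs Z).trace.re := by
  rw [traceNorm, Matrix.PosSemidef.sqrt_eq_cfcSqrt]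
  rfl

theorem re_trace_le_re_trace_inv_add_smul_one_mul (P : Matrix n n ℂ) (hP : 0 ≤ P) {η : ℝ}
    (hη : 0 < η) :
    P.trace.re ≤ ((P + η • (1 : Matrix n n ℂ))⁻¹ * (P * P)).trace.re + η * Fintype.card n := by
  set S := P + η • (1 : Matrix n n ℂ)
  have hSpd : S.PosDef := Matrix.PosDef.posSemidef_add hP.posSemidef (Matrix.PosDef.one.smul hη)
  have hdet := (Matrix.isUnit_iff_isUnit_det S).mp hSpd.isUnit
  have hPS : S⁻¹ * (P * P) = P - η • 1 + η ^ 2 • S⁻¹ := by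
    have hP' : P = S - η • 1 := by simp [S]
    nth_rewrite 1 [hP']
    nth_rewrite 1 [hP']
    simp only [Matrix.mul_sub, Matrix.sub_mul, Matrix.mul_smul, Matrix.smul_mul, Matrix.mul_one,
      Matrix.one_mul, ← Matrix.mul_assoc, Matrix.nonsing_inv_mul _ hdet]
    simp only [S]
    module
  have hinv : 0 ≤ S⁻¹.trace.re := Matrix.re_trace_nonneg hSpd.inv.posSemidef.nonneg
  rw [hPS]
  simp only [Matrix.trace_add, Matrix.trace_sub, Matrix.trace_smul, Matrix.trace_one,
    Complex.add_re, Complex.sub_re, Complex.smul_re, Complex.natCast_re, smul_eq_mul]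
  nlinarith

theorem exists_approx_polar_decomposition (Z : Matrix n n ℂ) {ε : ℝ} (hε : 0 < ε) :
    ∃ V S : Matrix n n ℂ, ‖V‖ ≤ 1 ∧ 0 ≤ S ∧ Z = V * S ∧ S.trace.re ≤ traceNorm Z + ε ∧
      traceNorm Z ≤ (Vᴴ * Z).trace.re + ε := by
  set P := CFC.abs Z
  have hP : 0 ≤ P := CFC.abs_nonneg Z
  have hPP : P * P = Zᴴ * Z := CFC.abs_mul_abs Z
  rw [traceNorm_eq_re_trace_abs]
  set η := ε / (Fintype.card n + 1)
  have hη : 0 < η := by positivity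
  have hηn : η * Fintype.card n ≤ ε := by
    rw [div_mul_eq_mul_div, div_le_iff₀ (by positivity)]
    nlinarith
  set S := P + η • (1 : Matrix n n ℂ)
  have hSpd : S.PosDef := Matrix.PosDef.posSemidef_add hP.posSemidef (Matrix.PosDef.one.smul hη)
  have hdet := (Matrix.isUnit_iff_isUnit_det S).mp hSpd.isUnit
  have hPS : Zᴴ * Z ≤ S * S := by
    have hSS : S * S = P * P + ((2 * η) • P + (η ^ 2) • 1) := by
      simp only [S, Matrix.add_mul, Matrix.mul_add, Matrix.smul_mul, Matrix.mul_smul,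
        Matrix.one_mul, Matrix.mul_one]
      module
    rw [← hPP, hSS, le_add_iff_nonneg_right]
    exact add_nonneg (smul_nonneg (by positivity) hP)
      (smul_nonneg (by positivity) Matrix.PosSemidef.one.nonneg)
  refine ⟨Z * S⁻¹, S, norm_mul_inv_le_one_of_le hSpd.isUnit hSpd.1.eq hPS, hSpd.posSemidef.nonneg,
    by rw [Matrix.mul_assoc, Matrix.nonsing_inv_mul _ hdet, Matrix.mul_one], ?_, ?_⟩
  · simp only [S, Matrix.trace_add, Matrix.trace_smul, Matrix.trace_one, Complex.add_re,
      Complex.smul_re, Complex.natCast_re, smul_eq_mul]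
    linarith
  · rw [Matrix.conjTranspose_mul, Matrix.conjTranspose_nonsing_inv, hSpd.1.eq, Matrix.mul_assoc,
      ← hPP]
    linarith [re_trace_le_re_trace_inv_add_smul_one_mul P hP hη]

theorem re_trace_mul_le_traceNorm {W : Matrix n n ℂ} (hW : ‖W‖ ≤ 1) (Z : Matrix n n ℂ) :
    (W * Z).trace.re ≤ traceNorm Z := by
  refine le_of_forall_pos_le_add fun ε hε ↦ ?_
  obtain ⟨V, S, hV, hS, rfl, hSZ, -⟩ := exists_approx_polar_decomposition Z hε
  calc (W * (V * S)).trace.re = (W * V * S).trace.re := by rw [Matrix.mul_assoc]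
    _ ≤ S.trace.re := re_trace_mul_le_of_norm_le_one
        ((norm_mul_le W V).trans (mul_le_one₀ hW (norm_nonneg V) hV)) hS
    _ ≤ traceNorm (V * S) + ε := hSZ

theorem traceNorm_le_of_forall_norm_le_one {Z : Matrix n n ℂ} {c : ℝ}
    (h : ∀ W : Matrix n n ℂ, ‖W‖ ≤ 1 → (W * Z).trace.re ≤ c) : traceNorm Z ≤ c := by
  refine le_of_forall_pos_le_add fun ε hε ↦ ?_
  obtain ⟨V, -, hV, -, -, -, hZ⟩ := exists_approx_polar_decomposition Z hε
  linarith [h Vᴴ (by rwa [Matrix.l2_opNorm_conjTranspose])]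

theorem traceNorm_add_le (Z₁ Z₂ : Matrix n n ℂ) :
    traceNorm (Z₁ + Z₂) ≤ traceNorm Z₁ + traceNorm Z₂ :=
  traceNorm_le_of_forall_norm_le_one fun W hW ↦ by
    rw [Matrix.mul_add, Matrix.trace_add, Complex.add_re]
    exact add_le_add (re_trace_mul_le_traceNorm hW Z₁) (re_trace_mul_le_traceNorm hW Z₂)

theorem traceNorm_mul_le_hsNorm_mul_hsNorm (X Y : Matrix n n ℂ) :
    traceNorm (X * Y) ≤ hsNorm X * hsNorm Y :=
  traceNorm_le_of_forall_norm_le_one fun W hW ↦ calc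
    (W * (X * Y)).trace.re = (Xᴴᴴ * (Y * W)).trace.re := by
      rw [Matrix.conjTranspose_conjTranspose, Matrix.trace_mul_comm, Matrix.mul_assoc]
    _ ≤ hsNorm Xᴴ * hsNorm (Y * W) := re_trace_conjTranspose_mul_le _ _
    _ ≤ hsNorm X * hsNorm Y := by
      rw [hsNorm_conjTranspose]
      gcongr
      exacts [Real.sqrt_nonneg _, hsNorm_mul_le_of_norm_le_one_right hW Y]

end TraceNorm

section Gentle

variable {n : Type*} [Fintype n] [DecidableEq n]

theorem traceNorm_sub_mul_mul_conjTranspose_le {ρ K : Matrix n n ℂ} (hρ : 0 ≤ ρ)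
    (hK : ‖K‖ ≤ 1) :
    traceNorm (ρ - K * ρ * Kᴴ) ≤ 2 * √((1 - K) * ρ * (1 - K)ᴴ).trace.re * √ρ.trace.re := by
  set R := CFC.sqrt ρ
  have hR : Rᴴ = R := (CFC.sqrt_nonneg ρ).star_eq
  have hRR : R * R = ρ := CFC.sqrt_mul_sqrt_self ρ
  set E := 1 - K
  have hsplit : ρ - K * ρ * Kᴴ = (E * R) * R + (K * R) * (R * Eᴴ) := by
    simp only [E, ← hRR, Matrix.conjTranspose_sub, Matrix.conjTranspose_one]
    noncomm_ring
  have hER : hsNorm (E * R) = hsNorm (R * Eᴴ) := by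
    rw [← hsNorm_conjTranspose, Matrix.conjTranspose_mul, hR]
  have hREρ : hsNorm (R * Eᴴ) = √(E * ρ * Eᴴ).trace.re := by
    rw [hsNorm, Matrix.conjTranspose_mul, Matrix.conjTranspose_conjTranspose, hR, ← hRR]
    simp only [Matrix.mul_assoc]
  have hRρ : hsNorm R = √ρ.trace.re := by rw [hsNorm, hR, hRR]
  calc traceNorm (ρ - K * ρ * Kᴴ)
      ≤ traceNorm ((E * R) * R) + traceNorm ((K * R) * (R * Eᴴ)) :=
        hsplit ▸ traceNorm_add_le _ _
    _ ≤ hsNorm (E * R) * hsNorm R + hsNorm (K * R) * hsNorm (R * Eᴴ) :=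
        add_le_add (traceNorm_mul_le_hsNorm_mul_hsNorm _ _)
          (traceNorm_mul_le_hsNorm_mul_hsNorm _ _)
    _ ≤ hsNorm (R * Eᴴ) * hsNorm R + hsNorm R * hsNorm (R * Eᴴ) := by
        rw [hER]
        gcongr
        exacts [Real.sqrt_nonneg _, hsNorm_mul_le_of_norm_le_one_left hK R]
    _ = 2 * √(E * ρ * Eᴴ).trace.re * √ρ.trace.re := by rw [hREρ, hRρ]; ring

end Gentle

section SquareRoot

variable {n : Type*} [Fintype n] [DecidableEq n]

theorem msqrt_of_posSemidef {X : Matrix n n ℂ} (hX : X.PosSemidef) : msqrt X = CFC.sqrt X := by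
  rw [msqrt, dif_pos hX, hX.sqrt_eq_cfcSqrt]

theorem re_trace_sqrt_sub_sqrt_mul_self_le {A B : Matrix n n ℂ} (hA : 0 ≤ A) (hAB : A ≤ B) :
    ((CFC.sqrt B - CFC.sqrt A) * (CFC.sqrt B - CFC.sqrt A)).trace.re ≤ (B - A).trace.re := by
  set S := CFC.sqrt B
  set Q := CFC.sqrt A
  have hQS : 0 ≤ S - Q := sub_nonneg.mpr (CFC.sqrt_le_sqrt A B hAB)
  have key : (B - A).trace = ((S - Q) * (S - Q)).trace +
      ((Q * (S - Q)).trace + (Q * (S - Q)).trace) := by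
    rw [← CFC.sqrt_mul_sqrt_self B (hA.trans hAB), ← CFC.sqrt_mul_sqrt_self A]
    simp only [Matrix.mul_sub, Matrix.sub_mul, Matrix.trace_sub, Matrix.trace_mul_comm S Q]
    ring
  rw [key, Complex.add_re, Complex.add_re]
  linarith [Matrix.re_trace_mul_nonneg (CFC.sqrt_nonneg A) hQS]

theorem norm_sqrt_mul_inv_sqrt_le_one {A B : Matrix n n ℂ} (hA : 0 ≤ A) (hAB : A ≤ B)
    (hB : B.PosDef) : ‖CFC.sqrt A * (CFC.sqrt B)⁻¹‖ ≤ 1 := by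
  refine norm_mul_inv_le_one_of_le (hB.isStrictlyPositive.isUnit_cfcSqrt B)
    (CFC.sqrt_nonneg B).star_eq ?_
  rwa [← Matrix.star_eq_conjTranspose, (CFC.sqrt_nonneg A).star_eq, CFC.sqrt_mul_sqrt_self A,
    CFC.sqrt_mul_sqrt_self B (hA.trans hAB)]

theorem re_trace_one_sub_sqrt_mul_inv_sqrt_conj_le {ρ A B : Matrix n n ℂ} (hA : 0 ≤ A)
    (hAB : A ≤ B) (hB : B.PosDef) (hρB : ρ ≤ B) :
    ((1 - CFC.sqrt A * (CFC.sqrt B)⁻¹) * ρ * (1 - CFC.sqrt A * (CFC.sqrt B)⁻¹)ᴴ).trace.re ≤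
      (B - A).trace.re := by
  set S := CFC.sqrt B
  set Q := CFC.sqrt A
  set E := 1 - Q * S⁻¹
  have hSh : Sᴴ = S := (CFC.sqrt_nonneg B).star_eq
  have hQh : Qᴴ = Q := (CFC.sqrt_nonneg A).star_eq
  have hSS : S * S = B := CFC.sqrt_mul_sqrt_self B (hA.trans hAB)
  have hdet := (Matrix.isUnit_iff_isUnit_det S).mp (hB.isStrictlyPositive.isUnit_cfcSqrt B)
  have hES : E * S = S - Q := by
    rw [Matrix.sub_mul, Matrix.one_mul, Matrix.mul_assoc, Matrix.nonsing_inv_mul _ hdet,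
      Matrix.mul_one]
  have hESE : E * B * Eᴴ = (S - Q) * (S - Q) := by
    nth_rewrite 2 [← hSh, ← hQh]
    rw [← Matrix.conjTranspose_sub, ← hES, Matrix.conjTranspose_mul, hSh, ← hSS]
    simp only [Matrix.mul_assoc]
  calc (E * ρ * Eᴴ).trace.re ≤ (E * B * Eᴴ).trace.re :=
        Matrix.re_trace_mono (star_right_conjugate_le_conjugate hρB E)
    _ ≤ (B - A).trace.re := hESE ▸ re_trace_sqrt_sub_sqrt_mul_self_le hA hAB

end SquareRoot

section Kronecker

variable {a b : Type*}

theorem one_kronecker_sub [DecidableEq a] (M N : Matrix b b ℂ) :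
    (1 : Matrix a a ℂ) ⊗ₖ (M - N) = (1 : Matrix a a ℂ) ⊗ₖ M - (1 : Matrix a a ℂ) ⊗ₖ N := by
  ext
  simp [mul_sub]

theorem trace_ptraceA [Fintype a] [Fintype b] (ρ : Matrix (a × b) (a × b) ℂ) :
    (ptraceA ρ).trace = ρ.trace := by
  simp only [Matrix.trace, Matrix.diag, ptraceA, Matrix.of_apply, Fintype.sum_prod_type]
  exact Finset.sum_comm

theorem ptraceA_one_kronecker_mul_mul [Fintype a] [DecidableEq a] [Fintype b]
    (ρ : Matrix (a × b) (a × b) ℂ) (M N : Matrix b b ℂ) :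
    ptraceA ((1 : Matrix a a ℂ) ⊗ₖ M * ρ * (1 : Matrix a a ℂ) ⊗ₖ N) = M * ptraceA ρ * N := by
  ext i j
  simp only [ptraceA, Matrix.mul_apply, Matrix.kroneckerMap_apply, Matrix.one_apply, ite_mul,
    one_mul, zero_mul, mul_ite, mul_zero, Fintype.sum_prod_type, Finset.sum_ite_irrel,
    Finset.sum_const_zero, Finset.sum_ite_eq, Finset.sum_ite_eq', Finset.mem_univ, if_true,
    Finset.sum_mul, Finset.mul_sum, Matrix.of_apply]
  rw [Finset.sum_comm]
  exact Finset.sum_congr rfl fun _ _ ↦ Finset.sum_comm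

theorem norm_one_kronecker_le_one [Fintype a] [DecidableEq a] [Fintype b] [DecidableEq b]
    {G : Matrix b b ℂ} (hG : ‖G‖ ≤ 1) :
    ‖(1 : Matrix a a ℂ) ⊗ₖ G‖ ≤ 1 := by
  rw [norm_le_one_iff_star_mul_self_le_one] at hG ⊢
  rw [Matrix.star_eq_conjTranspose, Matrix.conjTranspose_kronecker, Matrix.conjTranspose_one,
    ← Matrix.mul_kronecker_mul, Matrix.one_mul, ← Matrix.one_kronecker_one, ← sub_nonneg,
    ← one_kronecker_sub]
  exact (Matrix.PosSemidef.one.kronecker (sub_nonneg.mpr hG).posSemidef).nonneg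

end Kronecker

theorem gentle_conjugation_general
    {A B : Type*} [Fintype A] [DecidableEq A] [Fintype B] [DecidableEq B]
    (ρAB : Matrix (A × B) (A × B) ℂ) (hρ : IsDensity ρAB)
    (σB ΔB : Matrix B B ℂ) (hσ : σB.PosSemidef) (hΔ : ΔB.PosSemidef)
    (hle : (σB + ΔB - ptraceA ρAB).PosSemidef) (hpd : (σB + ΔB).PosDef)
    (G : Matrix B B ℂ) (hG : G = msqrt σB * (msqrt (σB + ΔB))⁻¹) :
    traceNorm (ρAB - ((1 : Matrix A A ℂ) ⊗ₖ G) * ρAB * ((1 : Matrix A A ℂ) ⊗ₖ G)ᴴ) ≤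
      2 * Real.sqrt (2 * (ΔB.trace).re) := by
  obtain ⟨hρ0, hρtr⟩ := hρ
  have hσle : σB ≤ σB + ΔB := le_add_of_nonneg_right hΔ.nonneg
  rw [msqrt_of_posSemidef hσ, msqrt_of_posSemidef hpd.posSemidef] at hG
  have hK : ‖(1 : Matrix A A ℂ) ⊗ₖ G‖ ≤ 1 :=
    norm_one_kronecker_le_one (hG ▸ norm_sqrt_mul_inv_sqrt_le_one hσ.nonneg hσle hpd)
  have hgentle : ((1 - (1 : Matrix A A ℂ) ⊗ₖ G) * ρAB * (1 - (1 : Matrix A A ℂ) ⊗ₖ G)ᴴ).trace.re ≤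
      ΔB.trace.re := by
    rw [← Matrix.one_kronecker_one, ← one_kronecker_sub, Matrix.conjTranspose_kronecker,
      Matrix.conjTranspose_one, ← trace_ptraceA, ptraceA_one_kronecker_mul_mul, hG]
    have h := re_trace_one_sub_sqrt_mul_inv_sqrt_conj_le hσ.nonneg hσle hpd
      (sub_nonneg.mp hle.nonneg)
    rwa [add_sub_cancel_left] at h
  calc _ ≤ 2 * √((1 - (1 : Matrix A A ℂ) ⊗ₖ G) * ρAB * (1 - (1 : Matrix A A ℂ) ⊗ₖ G)ᴴ).trace.re
        * √ρAB.trace.re := traceNorm_sub_mul_mul_conjTranspose_le hρ0.nonneg hK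
    _ ≤ 2 * √(2 * ΔB.trace.re) := by
      rw [hρtr, Complex.one_re, Real.sqrt_one, mul_one]
      gcongr
      linarith [Matrix.re_trace_nonneg hΔ.nonneg]

/-- Gentle conjugation lemma. -/
theorem gentle_conjugation
    {A B : Type*} [Fintype A] [DecidableEq A] [Fintype B] [DecidableEq B]
    (ρAB : Matrix (A × B) (A × B) ℂ) (hρ : IsDensity ρAB)
    (σB ΔB : Matrix B B ℂ) (hσ : σB.PosSemidef) (hΔ : ΔB.PosSemidef)
    (hσtr : (σB.trace).re ≤ 1) (hΔtr : (ΔB.trace).re ≤ 1)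
    (hle : (σB + ΔB - ptraceA ρAB).PosSemidef) (hpd : (σB + ΔB).PosDef)
    (G : Matrix B B ℂ) (hG : G = msqrt σB * (msqrt (σB + ΔB))⁻¹) :
    traceNorm (ρAB - ((1 : Matrix A A ℂ) ⊗ₖ G) * ρAB * ((1 : Matrix A A ℂ) ⊗ₖ G)ᴴ) ≤
      2 * Real.sqrt (2 * (ΔB.trace).re) :=
  gentle_conjugation_general ρAB hρ σB ΔB hσ hΔ hle hpd G hG
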